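/- arXiv:1708.07850 — 2 statements merged into one kernel-verified Lean document; each statement's English description precedes it below -/
import Mathlib

section
/- A matrix W belongs to the subdifferential ∂Ω_θ(X) if and only if ⟨W, X⟩ = Ω_θ(X) and uᵀWv ≤ θ(u,v) for all vectors u ∈ ℝ^D, v ∈ ℝ^N. -/
/-!
`Ω_θ` vanishes at `0`, is subadditive (concatenate factorizations) and satisfies
`Ω_θ(uvᵀ) ≤ θ(u,v)`. If `uᵀWv ≤ θ(u,v)` for all `u, v`, then summing over the columns of any
factorization `Z = UVᵀ` gives `⟨W,Z⟩ ≤ Ω_θ(Z)`; together with `⟨W,X⟩ = Ω_θ(X)` this is the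
subgradient inequality. Conversely, the subgradient inequality at `Z = 0` gives
`Ω_θ(X) ≤ ⟨W,X⟩` (so `Ω_θ(X)` is finite), and at `Z = X + uvᵀ` it gives
`Ω_θ(X) + uᵀWv ≤ Ω_θ(X + uvᵀ) ≤ Ω_θ(X) + θ(u,v)`, from which the finite `Ω_θ(X)` cancels.
-/

open Matrix Filter
open scoped ENNReal BigOperators

/-- The matrix factorization regularizer: infimum over all factorizations `X = U * Vᵀ`
(with a variable number `r` of columns) of the sum of `θ` applied to column pairs. -/
noncomputable def Omega {D N : ℕ} (θ : (Fin D → ℝ) → (Fin N → ℝ) → ℝ≥0∞)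
    (X : Matrix (Fin D) (Fin N) ℝ) : ℝ≥0∞ :=
  ⨅ (r : ℕ) (U : Matrix (Fin D) (Fin r) ℝ) (V : Matrix (Fin N) (Fin r) ℝ)
    (_ : U * Vᵀ = X), ∑ i : Fin r, θ (fun d => U d i) (fun n => V n i)

/-- `θ` is a rank-1 regularizer: positively homogeneous of degree 2, `θ(0,0) = 0`
(nonnegativity is automatic in `ℝ≥0∞`), and `θ(uₙ,vₙ) → ∞` whenever `‖uₙvₙᵀ‖_F → ∞`. -/
def IsRankOneReg {D N : ℕ} (θ : (Fin D → ℝ) → (Fin N → ℝ) → ℝ≥0∞) : Prop :=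
  (∀ (α : ℝ), 0 ≤ α → ∀ u v, θ (α • u) (α • v) = ENNReal.ofReal (α ^ 2) * θ u v) ∧
  (θ 0 0 = 0) ∧
  (∀ (u : ℕ → Fin D → ℝ) (v : ℕ → Fin N → ℝ),
    Tendsto (fun k => Real.sqrt (∑ d, ∑ m, (u k d * v k m) ^ 2)) atTop atTop →
    Tendsto (fun k => θ (u k) (v k)) atTop (nhds ⊤))

/-- The Frobenius (trace) inner product on matrices. -/
noncomputable def frobInner {D N : ℕ} (A B : Matrix (Fin D) (Fin N) ℝ) : ℝ :=
  ∑ d, ∑ n, A d n * B d n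

namespace EReal

theorem coe_ennreal_iInf {ι : Sort*} (f : ι → ℝ≥0∞) :
    ((⨅ i, f i : ℝ≥0∞) : EReal) = ⨅ i, (f i : EReal) :=
  Monotone.map_iInf_of_continuousAt continuous_coe_ennreal_ereal.continuousAt
    coe_ennreal_strictMono.monotone coe_ennreal_top

theorem coe_finset_sum {ι : Type*} (s : Finset ι) (f : ι → ℝ) :
    ((∑ i ∈ s, f i : ℝ) : EReal) = ∑ i ∈ s, (f i : EReal) :=
  map_sum (⟨⟨Real.toEReal, coe_zero⟩, coe_add⟩ : ℝ →+ EReal) f s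

theorem coe_ennreal_finset_sum {ι : Type*} (s : Finset ι) (f : ι → ℝ≥0∞) :
    ((∑ i ∈ s, f i : ℝ≥0∞) : EReal) = ∑ i ∈ s, (f i : EReal) :=
  map_sum (⟨⟨(↑), coe_ennreal_zero⟩, coe_ennreal_add⟩ : ℝ≥0∞ →+ EReal) f s

end EReal

section Frobenius

variable {D N : ℕ}

theorem frobInner_sub (W A B : Matrix (Fin D) (Fin N) ℝ) :
    frobInner W (A - B) = frobInner W A - frobInner W B := by
  simp only [frobInner, Matrix.sub_apply, mul_sub, Finset.sum_sub_distrib]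

theorem frobInner_zero (W : Matrix (Fin D) (Fin N) ℝ) : frobInner W 0 = 0 := by
  simp [frobInner]

theorem frobInner_vecMulVec (W : Matrix (Fin D) (Fin N) ℝ) (u : Fin D → ℝ) (v : Fin N → ℝ) :
    frobInner W (vecMulVec u v) = u ⬝ᵥ W *ᵥ v := by
  simp only [frobInner, vecMulVec_apply, dotProduct, mulVec, Finset.mul_sum]
  exact Finset.sum_congr rfl fun d _ => Finset.sum_congr rfl fun n _ => by ring

theorem frobInner_mul_transpose (W : Matrix (Fin D) (Fin N) ℝ) {r : ℕ}
    (U : Matrix (Fin D) (Fin r) ℝ) (V : Matrix (Fin N) (Fin r) ℝ) :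
    frobInner W (U * Vᵀ) = ∑ i, (fun d => U d i) ⬝ᵥ W *ᵥ (fun n => V n i) := by
  simp only [← frobInner_vecMulVec]
  simp only [frobInner, mul_apply, transpose_apply, vecMulVec_apply, Finset.mul_sum]
  exact (Finset.sum_congr rfl fun d _ => Finset.sum_comm).trans Finset.sum_comm

end Frobenius

section Omega

variable {D N : ℕ} {θ : (Fin D → ℝ) → (Fin N → ℝ) → ℝ≥0∞}

theorem omega_le_of_mul_transpose_eq {X : Matrix (Fin D) (Fin N) ℝ} {r : ℕ}
    {U : Matrix (Fin D) (Fin r) ℝ} {V : Matrix (Fin N) (Fin r) ℝ} (h : U * Vᵀ = X) :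
    Omega θ X ≤ ∑ i, θ (fun d => U d i) (fun n => V n i) :=
  iInf_le_of_le r <| iInf_le_of_le U <| iInf_le_of_le V <| iInf_le _ h

theorem omega_zero : Omega θ 0 = 0 :=
  nonpos_iff_eq_zero.mp <| by
    simpa using omega_le_of_mul_transpose_eq (θ := θ)
      (U := (0 : Matrix (Fin D) (Fin 0) ℝ)) (V := 0) (by simp)

theorem omega_vecMulVec_le (u : Fin D → ℝ) (v : Fin N → ℝ) :
    Omega θ (vecMulVec u v) ≤ θ u v := by
  have h : replicateCol (Fin 1) u * (replicateCol (Fin 1) v)ᵀ = vecMulVec u v := by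
    ext d n; simp [mul_apply, vecMulVec]
  simpa using omega_le_of_mul_transpose_eq (θ := θ) h

theorem omega_add_le_of_mul_transpose_eq {A B : Matrix (Fin D) (Fin N) ℝ} {r₁ r₂ : ℕ}
    {U₁ : Matrix (Fin D) (Fin r₁) ℝ} {V₁ : Matrix (Fin N) (Fin r₁) ℝ}
    {U₂ : Matrix (Fin D) (Fin r₂) ℝ} {V₂ : Matrix (Fin N) (Fin r₂) ℝ}
    (h₁ : U₁ * V₁ᵀ = A) (h₂ : U₂ * V₂ᵀ = B) :
    Omega θ (A + B) ≤ ∑ i, θ (fun d => U₁ d i) (fun n => V₁ n i)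
      + ∑ i, θ (fun d => U₂ d i) (fun n => V₂ n i) := by
  let e : Fin (r₁ + r₂) ≃ Fin r₁ ⊕ Fin r₂ := finSumFinEquiv.symm
  have h : (fromCols U₁ U₂).submatrix id e * ((fromCols V₁ V₂).submatrix id e)ᵀ = A + B := by
    rw [transpose_submatrix, transpose_fromCols, submatrix_mul_equiv, fromCols_mul_fromRows,
      h₁, h₂, submatrix_id_id]
  refine (omega_le_of_mul_transpose_eq h).trans_eq ?_
  rw [← e.symm.sum_comp, Fintype.sum_sum_type]
  simp [e]

theorem omega_add_le (A B : Matrix (Fin D) (Fin N) ℝ) :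
    Omega θ (A + B) ≤ Omega θ A + Omega θ B := by
  simp only [Omega, ENNReal.iInf_add, ENNReal.add_iInf]
  exact le_iInf fun _ => le_iInf fun _ => le_iInf fun _ => le_iInf fun hB =>
    le_iInf fun _ => le_iInf fun _ => le_iInf fun _ => le_iInf fun hA =>
      omega_add_le_of_mul_transpose_eq hA hB

theorem frobInner_le_omega {W : Matrix (Fin D) (Fin N) ℝ}
    (hW : ∀ u v, ((u ⬝ᵥ W *ᵥ v : ℝ) : EReal) ≤ (θ u v : EReal)) (Z : Matrix (Fin D) (Fin N) ℝ) :
    (frobInner W Z : EReal) ≤ (Omega θ Z : EReal) := by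
  simp only [Omega, EReal.coe_ennreal_iInf]
  refine le_iInf fun _ => le_iInf fun U => le_iInf fun V => le_iInf fun h => ?_
  rw [← h, frobInner_mul_transpose, EReal.coe_finset_sum, EReal.coe_ennreal_finset_sum]
  exact Finset.sum_le_sum fun i _ => hW _ _

end Omega

theorem omega_subdifferential_general {D N : ℕ} (θ : (Fin D → ℝ) → (Fin N → ℝ) → ℝ≥0∞)
    (X W : Matrix (Fin D) (Fin N) ℝ) :
    (∀ Z : Matrix (Fin D) (Fin N) ℝ,
        ((Omega θ X : ℝ≥0∞) : EReal) + ((frobInner W (Z - X) : ℝ) : EReal)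
          ≤ ((Omega θ Z : ℝ≥0∞) : EReal)) ↔
    (((frobInner W X : ℝ) : EReal) = ((Omega θ X : ℝ≥0∞) : EReal) ∧
      ∀ (u : Fin D → ℝ) (v : Fin N → ℝ), ((u ⬝ᵥ W *ᵥ v : ℝ) : EReal) ≤ (θ u v : EReal)) := by
  constructor
  · intro hsub
    have hX : (Omega θ X : EReal) ≤ frobInner W X := by
      have h0 := hsub 0
      rw [omega_zero, frobInner_sub, frobInner_zero, zero_sub, EReal.coe_neg, ← sub_eq_add_neg,
        EReal.coe_ennreal_zero] at h0
      exact EReal.sub_nonpos.mp h0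
    have hfin : Omega θ X ≠ ⊤ := fun h => by
      rw [h, EReal.coe_ennreal_top, top_le_iff] at hX
      exact EReal.coe_ne_top _ hX
    have hpolar : ∀ u v, ((u ⬝ᵥ W *ᵥ v : ℝ) : EReal) ≤ (θ u v : EReal) := fun u v => by
      have hle : Omega θ (X + vecMulVec u v) ≤ Omega θ X + θ u v :=
        (omega_add_le X _).trans (add_le_add le_rfl (omega_vecMulVec_le u v))
      have h := (hsub (X + vecMulVec u v)).trans (EReal.coe_ennreal_le_coe_ennreal_iff.mpr hle)
      rw [add_sub_cancel_left, frobInner_vecMulVec, EReal.coe_ennreal_add,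
        ← EReal.coe_ennreal_toReal hfin] at h
      exact EReal.addLECancellable_coe _ h
    exact ⟨le_antisymm (frobInner_le_omega hpolar X) hX, hpolar⟩
  · rintro ⟨hXW, hpolar⟩ Z
    calc (Omega θ X : EReal) + (frobInner W (Z - X) : EReal) = frobInner W Z := by
          rw [← hXW, ← EReal.coe_add, frobInner_sub, add_sub_cancel]
      _ ≤ Omega θ Z := frobInner_le_omega hpolar Z

/-- `W ∈ ∂Ω_θ(X)` iff `⟨W,X⟩ = Ω_θ(X)` and `uᵀWv ≤ θ(u,v)` for all `(u,v)`. -/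
theorem omega_subdifferential {D N : ℕ} (θ : (Fin D → ℝ) → (Fin N → ℝ) → ℝ≥0∞)
    (hθ : IsRankOneReg θ) (X W : Matrix (Fin D) (Fin N) ℝ) :
    (∀ Z : Matrix (Fin D) (Fin N) ℝ,
        ((Omega θ X : ℝ≥0∞) : EReal) + ((frobInner W (Z - X) : ℝ) : EReal)
          ≤ ((Omega θ Z : ℝ≥0∞) : EReal)) ↔
    (((frobInner W X : ℝ) : EReal) = ((Omega θ X : ℝ≥0∞) : EReal) ∧
      ∀ (u : Fin D → ℝ) (v : Fin N → ℝ), ((u ⬝ᵥ W *ᵥ v : ℝ) : EReal) ≤ (θ u v : EReal)) :=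
  omega_subdifferential_general θ X W
end

section
/- Suboptimality bound via the polar: let ℓ(Y,X,Q) be jointly convex in (X,Q), differentiable in X, with strong convexity constants m_X ≥ 0 in X and m_Q ≥ 0 in Q, and let (Ũ,Ṽ,Q̃) satisfy 0 ∈ ∂_Q ℓ(Y,ŨṼᵀ,Q̃) and ⟨−∇_X ℓ(Y,ŨṼᵀ,Q̃), ŨṼᵀ⟩ = λ∑_i θ(Ũ_i,Ṽ_i). Then f(Ũ,Ṽ,Q̃) − F(X̂,Q̂) ≤ λΩ_θ(X̂)[Ω_θ°(−(1/λ)∇_X ℓ(Y,ŨṼᵀ,Q̃)) − 1] − (m_X/2)‖ŨṼᵀ − X̂‖_F² − (m_Q/2)‖Q̃ − Q̂‖_F², where (X̂,Q̂) is any global minimizer of F(X,Q) = ℓ(Y,X,Q) + λΩ_θ(X). -/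
open Matrix Filter
open scoped ENNReal BigOperators

/-! Strong convexity at `(ŨṼᵀ, Q̃)`, with the zero subgradient in `Q`, bounds the gap by
`⟨−∇_Xℓ, X̂⟩ − λΩ_θ(X̂)` minus the quadratic terms, using the alignment condition to replace
`⟨−∇_Xℓ, ŨṼᵀ⟩` by `λ∑θ(Ũᵢ,Ṽᵢ)`. It remains to bound `⟨−∇_Xℓ, X̂⟩` by `λΩ_θ(X̂)Ω_θ°(−∇_Xℓ/λ)`:
by homogeneity of `θ` each rank-one term `uvᵀ` of a factorization satisfies
`⟨Z, uvᵀ⟩ ≤ Ω_θ°(Z) θ(u,v)`, and summing over factorizations almost attaining `Ω_θ(X̂)` gives the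
polar inequality. If `Ω_θ(X̂) = ∞` the gap is `−∞`. If the polar is infinite the bound is trivial
unless `Ω_θ(X̂) = 0`, and then `X̂ = 0` because coercivity of `θ` bounds the entries of `uvᵀ` on
`{θ ≤ 1}`. -/

theorem Matrix.mul_transpose_eq_sum_vecMulVec {m n k α : Type*} [Fintype k]
    [NonUnitalNonAssocSemiring α] (U : Matrix m k α) (V : Matrix n k α) :
    U * Vᵀ = ∑ i, vecMulVec (fun d => U d i) (fun n => V n i) := by
  ext d n
  simp [Matrix.mul_apply, vecMulVec_apply, Matrix.sum_apply]

theorem abs_le_sqrt_sum_sum_sq {ι κ : Type*} [Fintype ι] [Fintype κ] (f : ι → κ → ℝ) (i : ι)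
    (j : κ) : |f i j| ≤ √(∑ i, ∑ j, f i j ^ 2) :=
  Real.abs_le_sqrt <| (Finset.single_le_sum (f := fun j => f i j ^ 2) (fun _ _ => sq_nonneg _)
    (Finset.mem_univ j)).trans (Finset.single_le_sum (f := fun i => ∑ j, f i j ^ 2)
      (fun _ _ => Finset.sum_nonneg fun _ _ => sq_nonneg _) (Finset.mem_univ i))

theorem le_mul_of_forall_gt {a K b : ℝ} (h : ∀ c ∈ Set.Ioi b, a ≤ K * c) : a ≤ K * b :=
  ge_of_tendsto ((continuous_const.mul continuous_id).tendsto b |>.mono_left nhdsWithin_le_nhds)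
    (eventually_nhdsWithin_of_forall h)

theorem EReal.coe_sub_le_mul_sub_one {G : ℝ} {c p : ℝ≥0∞} (hc : c ≠ ⊤)
    (h : ENNReal.ofReal G ≤ c * p) :
    ((G - c.toReal : ℝ) : EReal) ≤ (c : EReal) * ((p : EReal) - 1) := by
  lift c to NNReal using hc
  rcases eq_or_ne p ⊤ with rfl | hp
  · rcases eq_or_ne c 0 with rfl | hc0
    · simpa using h
    · have htop : (⊤ : EReal) - 1 = ⊤ := rfl
      rw [EReal.coe_ennreal_top, htop, EReal.coe_nnreal_eq_coe_real,
        EReal.coe_mul_top_of_pos (by positivity)]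
      exact le_top
  · lift p to NNReal using hp
    rw [ENNReal.ofReal_le_iff_le_toReal (ENNReal.mul_ne_top (by simp) (by simp))] at h
    rw [EReal.coe_nnreal_eq_coe_real, EReal.coe_nnreal_eq_coe_real, ENNReal.coe_toReal]
    norm_cast
    simp only [ENNReal.toReal_mul, ENNReal.coe_toReal] at h
    linarith [mul_sub_one (c : ℝ) p]

section Polar

variable {D N : ℕ} {θ : (Fin D → ℝ) → (Fin N → ℝ) → ℝ≥0∞}

/-- `Ω_θ°(Z)`, with `Z` entering through the functional `φ = ⟨Z, ·⟩`. -/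
noncomputable def polar (θ : (Fin D → ℝ) → (Fin N → ℝ) → ℝ≥0∞)
    (φ : Matrix (Fin D) (Fin N) ℝ →ₗ[ℝ] ℝ) : ℝ≥0∞ :=
  ⨆ (u : Fin D → ℝ) (v : Fin N → ℝ) (_ : θ u v ≤ 1), ENNReal.ofReal (φ (vecMulVec u v))

theorem ofReal_apply_vecMulVec_le_polar (φ : Matrix (Fin D) (Fin N) ℝ →ₗ[ℝ] ℝ) {u : Fin D → ℝ}
    {v : Fin N → ℝ} (h : θ u v ≤ 1) : ENNReal.ofReal (φ (vecMulVec u v)) ≤ polar θ φ :=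
  le_iSup_of_le u (le_iSup_of_le v (le_iSup_of_le h le_rfl))

theorem polar_le_ofReal {φ : Matrix (Fin D) (Fin N) ℝ →ₗ[ℝ] ℝ} {C : ℝ}
    (h : ∀ u v, θ u v ≤ 1 → φ (vecMulVec u v) ≤ C) : polar θ φ ≤ ENNReal.ofReal C :=
  iSup₂_le fun u v => iSup_le fun huv => ENNReal.ofReal_le_ofReal (h u v huv)

theorem IsRankOneReg.apply_vecMulVec_le (hθ : IsRankOneReg θ)
    {φ : Matrix (Fin D) (Fin N) ℝ →ₗ[ℝ] ℝ} (hP : polar θ φ ≠ ⊤) {u : Fin D → ℝ} {v : Fin N → ℝ}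
    (huv : θ u v ≠ ⊤) : φ (vecMulVec u v) ≤ (polar θ φ).toReal * (θ u v).toReal := by
  refine le_mul_of_forall_gt fun s (hs : _ < s) => ?_
  have hs0 : 0 < s := ENNReal.toReal_nonneg.trans_lt hs
  set α := √s⁻¹
  have hα : α * α = s⁻¹ := Real.mul_self_sqrt (inv_nonneg.2 hs0.le)
  have hlevel : θ (α • u) (α • v) ≤ 1 := by
    rw [hθ.1 α (Real.sqrt_nonneg _), sq, hα, ← ENNReal.ofReal_toReal huv,
      ← ENNReal.ofReal_mul (inv_nonneg.2 hs0.le)]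
    exact ENNReal.ofReal_le_one.2 (inv_mul_le_one_of_le₀ hs.le hs0.le)
  have hscaled := ofReal_apply_vecMulVec_le_polar φ hlevel
  rw [smul_vecMulVec, vecMulVec_smul, map_smul, map_smul, smul_smul, hα, smul_eq_mul,
    ENNReal.ofReal_le_iff_le_toReal hP, inv_mul_le_iff₀ hs0] at hscaled
  linarith

theorem exists_sum_lt_of_Omega_lt {X : Matrix (Fin D) (Fin N) ℝ} {c : ℝ≥0∞}
    (h : Omega θ X < c) : ∃ (r : ℕ) (U : Matrix (Fin D) (Fin r) ℝ) (V : Matrix (Fin N) (Fin r) ℝ),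
      U * Vᵀ = X ∧ ∑ i, θ (fun d => U d i) (fun n => V n i) < c := by
  simpa only [Omega, iInf_lt_iff, exists_prop] using h

theorem IsRankOneReg.apply_le_polar_mul_Omega (hθ : IsRankOneReg θ)
    {φ : Matrix (Fin D) (Fin N) ℝ →ₗ[ℝ] ℝ} (hP : polar θ φ ≠ ⊤) {X : Matrix (Fin D) (Fin N) ℝ}
    (hX : Omega θ X ≠ ⊤) : φ X ≤ (polar θ φ).toReal * (Omega θ X).toReal := by
  refine le_mul_of_forall_gt fun c (hc : _ < c) => ?_
  obtain ⟨r, U, V, rfl, hsum⟩ :=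
    exists_sum_lt_of_Omega_lt ((ENNReal.lt_ofReal_iff_toReal_lt hX).2 hc)
  have hfin := ENNReal.sum_ne_top.1 (hsum.trans ENNReal.ofReal_lt_top).ne
  calc φ (U * Vᵀ) = ∑ i, φ (vecMulVec (fun d => U d i) (fun n => V n i)) := by
        rw [mul_transpose_eq_sum_vecMulVec, map_sum]
    _ ≤ ∑ i, (polar θ φ).toReal * (θ (fun d => U d i) (fun n => V n i)).toReal :=
        Finset.sum_le_sum fun i hi => hθ.apply_vecMulVec_le hP (hfin i hi)
    _ = (polar θ φ).toReal * (∑ i, θ (fun d => U d i) (fun n => V n i)).toReal := by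
        rw [ENNReal.toReal_sum hfin, Finset.mul_sum]
    _ ≤ (polar θ φ).toReal * c :=
        mul_le_mul_of_nonneg_left
          (ENNReal.toReal_le_of_le_ofReal (ENNReal.toReal_nonneg.trans hc.le) hsum.le)
          ENNReal.toReal_nonneg

theorem IsRankOneReg.exists_abs_mul_le (hθ : IsRankOneReg θ) :
    ∃ C, ∀ u v, θ u v ≤ 1 → ∀ d n, |u d * v n| ≤ C := by
  by_contra! hunb
  choose u v hle d n hlt using fun k : ℕ => hunb k
  have hnorm : ∀ k : ℕ, (k : ℝ) < √(∑ d, ∑ m, (u k d * v k m) ^ 2) := fun k =>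
    (hlt k).trans_le (abs_le_sqrt_sum_sum_sq (fun d m => u k d * v k m) (d k) (n k))
  have htop := hθ.2.2 u v
    (tendsto_atTop_mono (fun k => (hnorm k).le) tendsto_natCast_atTop_atTop)
  obtain ⟨k, hk⟩ := (htop.eventually (eventually_gt_nhds ENNReal.one_lt_top)).exists
  exact (hle k).not_gt hk

theorem IsRankOneReg.eq_zero_of_Omega_eq_zero (hθ : IsRankOneReg θ)
    {X : Matrix (Fin D) (Fin N) ℝ} (hX : Omega θ X = 0) : X = 0 := by
  obtain ⟨C, hC⟩ := hθ.exists_abs_mul_le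
  have hnonpos : ∀ φ : Matrix (Fin D) (Fin N) ℝ →ₗ[ℝ] ℝ,
      (∀ u v, θ u v ≤ 1 → φ (vecMulVec u v) ≤ C) → φ X ≤ 0 := fun φ hφ => by
    have := hθ.apply_le_polar_mul_Omega
      (ne_top_of_le_ne_top ENNReal.ofReal_ne_top (polar_le_ofReal hφ)) (X := X) (by simp [hX])
    rwa [hX, ENNReal.toReal_zero, mul_zero] at this
  ext d n
  have hle := hnonpos (entryLinearMap ℝ ℝ d n) fun u v h => (le_abs_self _).trans (hC u v h d n)
  have hge := hnonpos (-entryLinearMap ℝ ℝ d n) fun u v h => (neg_le_abs _).trans (hC u v h d n)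
  simp only [entryLinearMap_apply, LinearMap.neg_apply] at hle hge
  rw [Matrix.zero_apply]
  linarith

theorem IsRankOneReg.ofReal_apply_le_Omega_mul_polar (hθ : IsRankOneReg θ)
    (φ : Matrix (Fin D) (Fin N) ℝ →ₗ[ℝ] ℝ) {X : Matrix (Fin D) (Fin N) ℝ}
    (hX : Omega θ X ≠ ⊤) : ENNReal.ofReal (φ X) ≤ Omega θ X * polar θ φ := by
  by_cases hP : polar θ φ = ⊤
  · rcases eq_or_ne (Omega θ X) 0 with h0 | h0
    · simp [hθ.eq_zero_of_Omega_eq_zero h0]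
    · simp [hP, ENNReal.mul_top h0]
  · calc ENNReal.ofReal (φ X) ≤ ENNReal.ofReal ((polar θ φ).toReal * (Omega θ X).toReal) :=
          ENNReal.ofReal_le_ofReal (hθ.apply_le_polar_mul_Omega hP hX)
      _ = Omega θ X * polar θ φ := by
          rw [ENNReal.ofReal_mul ENNReal.toReal_nonneg, ENNReal.ofReal_toReal hP,
            ENNReal.ofReal_toReal hX, mul_comm]

end Polar

theorem suboptimality_polar_bound_general {D N P r : ℕ}
    (θ : (Fin D → ℝ) → (Fin N → ℝ) → ℝ≥0∞) (hθ : IsRankOneReg θ)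
    (ℓ : (Fin D → Fin N → ℝ) → (Fin P → ℝ) → ℝ)
    (lam : ℝ) (hlam : 0 < lam) (mX mQ : ℝ)
    -- strong convexity of ℓ with constants mX (in X) and mQ (in Q):
    (hstrong : ∀ (X₁ X₂ : Matrix (Fin D) (Fin N) ℝ) (Q₁ Q₂ : Fin P → ℝ) (W : Fin P → ℝ),
      (∀ Q' : Fin P → ℝ, ℓ X₁ Q₁ + ∑ p, W p * (Q' p - Q₁ p) ≤ ℓ X₁ Q') →
      ℓ X₁ Q₁ + fderiv ℝ (fun X : Fin D → Fin N → ℝ => ℓ X Q₁) X₁ (X₂ - X₁)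
          + (∑ p, W p * (Q₂ p - Q₁ p))
          + (mX / 2) * (∑ d, ∑ n, (X₁ d n - X₂ d n) ^ 2)
          + (mQ / 2) * (∑ p, (Q₁ p - Q₂ p) ^ 2) ≤ ℓ X₂ Q₂)
    (Ut : Matrix (Fin D) (Fin r) ℝ) (Vt : Matrix (Fin N) (Fin r) ℝ) (Qt : Fin P → ℝ)
    -- condition (1): 0 ∈ ∂_Q ℓ(Y, ŨṼᵀ, Q̃)
    (h1 : ∀ Q : Fin P → ℝ, ℓ (Ut * Vtᵀ) Qt ≤ ℓ (Ut * Vtᵀ) Q)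
    -- condition (2): ⟨−∇_X ℓ, ŨṼᵀ⟩ = λ ∑ᵢ θ(Ũᵢ,Ṽᵢ)
    (h2 : ((-(fderiv ℝ (fun X : Fin D → Fin N → ℝ => ℓ X Qt) (Ut * Vtᵀ)
            ((Ut * Vtᵀ : Matrix (Fin D) (Fin N) ℝ) : Fin D → Fin N → ℝ)) : ℝ) : EReal)
      = ((ENNReal.ofReal lam * ∑ i : Fin r, θ (fun d => Ut d i) (fun n => Vt n i) : ℝ≥0∞) : EReal))
    (Xh : Matrix (Fin D) (Fin N) ℝ) (Qh : Fin P → ℝ) :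
    (((ℓ (Ut * Vtᵀ) Qt : ℝ) : EReal) +
        ((ENNReal.ofReal lam * ∑ i : Fin r, θ (fun d => Ut d i) (fun n => Vt n i) : ℝ≥0∞) : EReal))
      - (((ℓ Xh Qh : ℝ) : EReal) + ((ENNReal.ofReal lam * Omega θ Xh : ℝ≥0∞) : EReal))
    ≤ ((ENNReal.ofReal lam * Omega θ Xh : ℝ≥0∞) : EReal) *
        (((⨆ (u : Fin D → ℝ) (v : Fin N → ℝ) (_ : θ u v ≤ 1),
            ENNReal.ofReal ((-(1 / lam)) * fderiv ℝ (fun X : Fin D → Fin N → ℝ => ℓ X Qt)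
              (Ut * Vtᵀ) (vecMulVec u v)) : ℝ≥0∞) : EReal) - 1)
      - (((mX / 2) * (∑ d, ∑ n, ((Ut * Vtᵀ : Matrix (Fin D) (Fin N) ℝ) d n - Xh d n) ^ 2) : ℝ) : EReal)
      - (((mQ / 2) * (∑ p, (Qt p - Qh p) ^ 2) : ℝ) : EReal) := by
  have hgap := hstrong (Ut * Vtᵀ) Xh Qt Qh 0 fun Q => by simpa using h1 Q
  set g := fderiv ℝ (fun X : Fin D → Fin N → ℝ => ℓ X Qt) (Ut * Vtᵀ)
  simp only [Pi.zero_apply, zero_mul, Finset.sum_const_zero, add_zero] at hgap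
  have hg_sub : g (Xh - Ut * Vtᵀ) = g Xh - g (Ut * Vtᵀ) := map_sub g _ _
  rw [← h2]
  rcases eq_or_ne (Omega θ Xh) ⊤ with hΩ | hΩ
  · rw [hΩ, ENNReal.mul_top (ENNReal.ofReal_pos.2 hlam).ne', EReal.coe_ennreal_top,
      EReal.coe_add_top, EReal.sub_top]
    exact bot_le
  set c := ENNReal.ofReal lam * Omega θ Xh
  have hc : c ≠ ⊤ := ENNReal.mul_ne_top ENNReal.ofReal_ne_top hΩ
  have hpolar : ENNReal.ofReal (-g Xh) ≤
      c * polar θ ((-(1 / lam)) • (g.toLinearMap : Matrix (Fin D) (Fin N) ℝ →ₗ[ℝ] ℝ)) := by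
    have hscale :
        ENNReal.ofReal (-g Xh) = ENNReal.ofReal lam * ENNReal.ofReal (-(1 / lam) * g Xh) := by
      rw [← ENNReal.ofReal_mul hlam.le]
      congr 1
      field_simp
    rw [hscale, mul_assoc]
    gcongr
    exact hθ.ofReal_apply_le_Omega_mul_polar _ hΩ
  calc _ = ((ℓ (Ut * Vtᵀ) Qt + -g (Ut * Vtᵀ) - (ℓ Xh Qh + c.toReal) : ℝ) : EReal) := by
        rw [← EReal.coe_ennreal_toReal hc]
        norm_cast
    _ ≤ ((-g Xh - c.toReal
          - mX / 2 * ∑ d, ∑ n, ((Ut * Vtᵀ : Matrix (Fin D) (Fin N) ℝ) d n - Xh d n) ^ 2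
          - mQ / 2 * ∑ p, (Qt p - Qh p) ^ 2 : ℝ) : EReal) :=
        EReal.coe_le_coe_iff.2 (by linarith)
    _ ≤ _ := by
      push_cast
      exact EReal.sub_le_sub
        (EReal.sub_le_sub (EReal.coe_sub_le_mul_sub_one hc hpolar) le_rfl) le_rfl

/-- Suboptimality bound via the polar: if `(Ũ,Ṽ,Q̃)` satisfies `0 ∈ ∂_Q ℓ` and the
alignment condition `⟨−∇_Xℓ, ŨṼᵀ⟩ = λ∑ᵢθ(Ũᵢ,Ṽᵢ)`, then the objective gap to a global
minimizer `(X̂,Q̂)` of `F` is bounded by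
`λΩ_θ(X̂)[Ω_θ°(−(1/λ)∇_Xℓ) − 1] − (m_X/2)‖ŨṼᵀ−X̂‖² − (m_Q/2)‖Q̃−Q̂‖²`. -/
theorem suboptimality_polar_bound {D N P r : ℕ}
    (θ : (Fin D → ℝ) → (Fin N → ℝ) → ℝ≥0∞) (hθ : IsRankOneReg θ)
    (ℓ : (Fin D → Fin N → ℝ) → (Fin P → ℝ) → ℝ)
    (hconv : ConvexOn ℝ Set.univ (fun p : (Fin D → Fin N → ℝ) × (Fin P → ℝ) => ℓ p.1 p.2))
    (hdiff : ∀ Q : Fin P → ℝ, Differentiable ℝ (fun X : Fin D → Fin N → ℝ => ℓ X Q))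
    (lam : ℝ) (hlam : 0 < lam) (mX mQ : ℝ) (hmX : 0 ≤ mX) (hmQ : 0 ≤ mQ)
    -- strong convexity of ℓ with constants mX (in X) and mQ (in Q):
    (hstrong : ∀ (X₁ X₂ : Matrix (Fin D) (Fin N) ℝ) (Q₁ Q₂ : Fin P → ℝ) (W : Fin P → ℝ),
      (∀ Q' : Fin P → ℝ, ℓ X₁ Q₁ + ∑ p, W p * (Q' p - Q₁ p) ≤ ℓ X₁ Q') →
      ℓ X₁ Q₁ + fderiv ℝ (fun X : Fin D → Fin N → ℝ => ℓ X Q₁) X₁ (X₂ - X₁)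
          + (∑ p, W p * (Q₂ p - Q₁ p))
          + (mX / 2) * (∑ d, ∑ n, (X₁ d n - X₂ d n) ^ 2)
          + (mQ / 2) * (∑ p, (Q₁ p - Q₂ p) ^ 2) ≤ ℓ X₂ Q₂)
    (Ut : Matrix (Fin D) (Fin r) ℝ) (Vt : Matrix (Fin N) (Fin r) ℝ) (Qt : Fin P → ℝ)
    -- condition (1): 0 ∈ ∂_Q ℓ(Y, ŨṼᵀ, Q̃)
    (h1 : ∀ Q : Fin P → ℝ, ℓ (Ut * Vtᵀ) Qt ≤ ℓ (Ut * Vtᵀ) Q)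
    -- condition (2): ⟨−∇_X ℓ, ŨṼᵀ⟩ = λ ∑ᵢ θ(Ũᵢ,Ṽᵢ)
    (h2 : ((-(fderiv ℝ (fun X : Fin D → Fin N → ℝ => ℓ X Qt) (Ut * Vtᵀ)
            ((Ut * Vtᵀ : Matrix (Fin D) (Fin N) ℝ) : Fin D → Fin N → ℝ)) : ℝ) : EReal)
      = ((ENNReal.ofReal lam * ∑ i : Fin r, θ (fun d => Ut d i) (fun n => Vt n i) : ℝ≥0∞) : EReal))
    (Xh : Matrix (Fin D) (Fin N) ℝ) (Qh : Fin P → ℝ)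
    -- (X̂,Q̂) is a global minimizer of F(X,Q) = ℓ(Y,X,Q) + λΩ_θ(X)
    (hglob : ∀ (X : Matrix (Fin D) (Fin N) ℝ) (Q : Fin P → ℝ),
      ((ℓ Xh Qh : ℝ) : EReal) + ((ENNReal.ofReal lam * Omega θ Xh : ℝ≥0∞) : EReal)
        ≤ ((ℓ X Q : ℝ) : EReal) + ((ENNReal.ofReal lam * Omega θ X : ℝ≥0∞) : EReal)) :
    (((ℓ (Ut * Vtᵀ) Qt : ℝ) : EReal) +
        ((ENNReal.ofReal lam * ∑ i : Fin r, θ (fun d => Ut d i) (fun n => Vt n i) : ℝ≥0∞) : EReal))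
      - (((ℓ Xh Qh : ℝ) : EReal) + ((ENNReal.ofReal lam * Omega θ Xh : ℝ≥0∞) : EReal))
    ≤ ((ENNReal.ofReal lam * Omega θ Xh : ℝ≥0∞) : EReal) *
        (((⨆ (u : Fin D → ℝ) (v : Fin N → ℝ) (_ : θ u v ≤ 1),
            ENNReal.ofReal ((-(1 / lam)) * fderiv ℝ (fun X : Fin D → Fin N → ℝ => ℓ X Qt)
              (Ut * Vtᵀ) (vecMulVec u v)) : ℝ≥0∞) : EReal) - 1)
      - (((mX / 2) * (∑ d, ∑ n, ((Ut * Vtᵀ : Matrix (Fin D) (Fin N) ℝ) d n - Xh d n) ^ 2) : ℝ) : EReal)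
      - (((mQ / 2) * (∑ p, (Qt p - Qh p) ^ 2) : ℝ) : EReal) :=
  suboptimality_polar_bound_general θ hθ ℓ lam hlam mX mQ hstrong Ut Vt Qt h1 h2 Xh Qh
end
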